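/- arXiv:1007.4896 — 2 statements merged into one kernel-verified Lean document; each statement's English description precedes it below -/
import Mathlib

section
/- The Dorfman bracket on the morphism space E of the omni-Lie 2-algebra gl(𝕍) ⊕ 𝕍 satisfies the Leibniz rule: for all e₁, e₂, e₃ ∈ E, {e₁, {e₂, e₃}} = {{e₁, e₂}, e₃} + {e₂, {e₁, e₃}}. -/
/-!
The Dorfman bracket on `E = gl(𝕍) ⊕ 𝕍` is the semidirect product of the bracket of `gl(𝕍)` with
its action on `𝕍`, so its Leibniz rule splits into the Leibniz (Jacobi) identity of `gl(𝕍)` and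
the fact that the action is a representation. On `End⁰` the bracket is the commutator in the ring
`End V₀ × End V₁`; the `End¹`- and `𝕍`-components are direct expansions, in which
`A₀ ∘ d = d ∘ A₁` lets `d` pass through `A`.
-/

open LinearMap

noncomputable section

namespace Omni

variable {V₀ V₁ : Type*}
  [AddCommGroup V₀] [Module ℝ V₀] [AddCommGroup V₁] [Module ℝ V₁]

variable (d : V₁ →ₗ[ℝ] V₀)

/-- `End⁰`: pairs `(A₀, A₁)` of endomorphisms with `A₀ ∘ d = d ∘ A₁`. -/
def End0 : Submodule ℝ ((V₀ →ₗ[ℝ] V₀) × (V₁ →ₗ[ℝ] V₁)) where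
  carrier := {A | A.1 ∘ₗ d = d ∘ₗ A.2}
  add_mem' := by
    intro a b ha hb
    simp only [Set.mem_setOf_eq] at *
    simp [add_comp, comp_add, ha, hb]
  zero_mem' := by
    simp only [Set.mem_setOf_eq]
    simp
  smul_mem' := by
    intro c a ha
    simp only [Set.mem_setOf_eq] at *
    simp [smul_comp, comp_smul, ha]

lemma mem_End0 {A : (V₀ →ₗ[ℝ] V₀) × (V₁ →ₗ[ℝ] V₁)} :
    A ∈ End0 d ↔ A.1 ∘ₗ d = d ∘ₗ A.2 := Iff.rfl

/-- Morphism space of `gl(𝕍)`:  `End⁰ ⊕ End¹`. -/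
abbrev Gl := ↥(End0 d) × (V₀ →ₗ[ℝ] V₁)

/-- Morphism space of the omni-Lie 2-algebra `gl(𝕍) ⊕ 𝕍`. -/
abbrev E := Gl d × (V₀ × V₁)

/-- `δ : End¹ → End⁰`, `δφ = (d∘φ, φ∘d)`. -/
def δm (φ : V₀ →ₗ[ℝ] V₁) : End0 d :=
  ⟨(d ∘ₗ φ, φ ∘ₗ d), by
    rw [mem_End0]
    exact (comp_assoc _ _ _).symm⟩

/-- commutator bracket on `End⁰`. -/
def bkt0 (A B : End0 d) : End0 d :=
  ⟨(A.1.1 ∘ₗ B.1.1 - B.1.1 ∘ₗ A.1.1, A.1.2 ∘ₗ B.1.2 - B.1.2 ∘ₗ A.1.2), by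
    have hA : A.1.1 ∘ₗ d = d ∘ₗ A.1.2 := A.2
    have hB : B.1.1 ∘ₗ d = d ∘ₗ B.1.2 := B.2
    rw [mem_End0]
    have ha : ∀ x, A.1.1 (d x) = d (A.1.2 x) := fun x => LinearMap.congr_fun hA x
    have hb : ∀ x, B.1.1 (d x) = d (B.1.2 x) := fun x => LinearMap.congr_fun hB x
    ext m
    simp [ha, hb]⟩

/-- `[A,φ] = A₁ ∘ φ - φ ∘ A₀` for `A ∈ End⁰`, `φ ∈ End¹`. -/
def bktAφ (A : End0 d) (φ : V₀ →ₗ[ℝ] V₁) : V₀ →ₗ[ℝ] V₁ :=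
  A.1.2 ∘ₗ φ - φ ∘ₗ A.1.1

/-- `[φ,ψ]_δ = φ∘d∘ψ - ψ∘d∘φ`. -/
def bktδ (φ ψ : V₀ →ₗ[ℝ] V₁) : V₀ →ₗ[ℝ] V₁ :=
  φ ∘ₗ d ∘ₗ ψ - ψ ∘ₗ d ∘ₗ φ

/-- bracket on the morphism space `End⁰ ⊕ End¹` of `gl(𝕍)`. -/
def bkt (X Y : Gl d) : Gl d :=
  (bkt0 d X.1 Y.1, bktAφ d X.1 Y.2 - bktAφ d Y.1 X.2 + bktδ d X.2 Y.2)

/-- action of `gl(𝕍)` on `𝕍`:  `(A,φ)·(u,m) = (A₀u, A₁m + φ(u+dm))`. -/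
def act (X : Gl d) (ξ : V₀ × V₁) : V₀ × V₁ :=
  (X.1.1.1 ξ.1, X.1.1.2 ξ.2 + X.2 (ξ.1 + d ξ.2))

/-- the `𝕍`-valued pairing on `E`. -/
def pairE (e₁ e₂ : E d) : V₀ × V₁ :=
  (2⁻¹ : ℝ) • (act d e₁.1 e₂.2 + act d e₂.1 e₁.2)

/-- pairing at the level of objects. -/
def pairObj (x y : (End0 d) × V₀) : V₀ :=
  (2⁻¹ : ℝ) • (x.1.1.1 y.2 + y.1.1.1 x.2)

/-- the Courant bracket on `E`. -/
def courant (e₁ e₂ : E d) : E d :=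
  (bkt d e₁.1 e₂.1, (2⁻¹ : ℝ) • (act d e₁.1 e₂.2 - act d e₂.1 e₁.2))

/-- Courant bracket at the level of objects. -/
def courantObj (x y : (End0 d) × V₀) : (End0 d) × V₀ :=
  (bkt0 d x.1 y.1, (2⁻¹ : ℝ) • (x.1.1.1 y.2 - y.1.1.1 x.2))

/-- the Dorfman bracket on `E`. -/
def dorfman (e₁ e₂ : E d) : E d :=
  (bkt d e₁.1 e₂.1, act d e₁.1 e₂.2)

/-- source of a morphism of `gl(𝕍) ⊕ 𝕍`. -/
def sE (e : E d) : (End0 d) × V₀ := (e.1.1, e.2.1)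

/-- target of a morphism of `gl(𝕍) ⊕ 𝕍`. -/
def tE (e : E d) : (End0 d) × V₀ := (e.1.1 + δm d e.1.2, e.2.1 + d e.2.2)

/-- vertical composition of morphisms of `gl(𝕍) ⊕ 𝕍`. -/
def compE (e e' : E d) : E d := ((e.1.1, e.1.2 + e'.1.2), (e.2.1, e.2.2 + e'.2.2))

/-- vertical composition of morphisms of `𝕍`. -/
def compV (x y : V₀ × V₁) : V₀ × V₁ := (x.1, x.2 + y.2)

/-- orthogonal complement w.r.t. the `𝕍`-valued pairing. -/
def perp (L : Set (E d)) : Set (E d) := {e | ∀ l ∈ L, pairE d e l = 0}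

/-- bilinear functor data `(F₀, F_a, F_b)` for `𝕍`. -/
structure BilinData where
  F0 : V₀ →ₗ[ℝ] V₀ →ₗ[ℝ] V₀
  Fa : V₀ →ₗ[ℝ] V₁ →ₗ[ℝ] V₁
  Fb : V₁ →ₗ[ℝ] V₀ →ₗ[ℝ] V₁
  ha : ∀ u n, d (Fa u n) = F0 u (d n)
  hb : ∀ m v, d (Fb m v) = F0 (d m) v
  hc : ∀ m n, Fa (d m) n = Fb m (d n)

/-- `ad_F (u,m) = ((F₀(u,·), F_a(u,·)), F_b(m,·))`. -/
def adF (F : BilinData d) (ξ : V₀ × V₁) : Gl d :=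
  (⟨(F.F0 ξ.1, F.Fa ξ.1), by
      rw [mem_End0]
      ext n
      exact (F.ha ξ.1 n).symm⟩, F.Fb ξ.2)

/-- the graph `G_F = {(ad_F ξ, ξ)}`. -/
def graphF (F : BilinData d) : Set (E d) := {e | ∃ ξ : V₀ × V₁, e = (adF d F ξ, ξ)}

/-- an isomorphism `μ = (μ₀, μ₁, μ₂)` from the Lie 2-algebra `gl(𝕍)` to itself. -/
structure GlIso where
  μ0 : (End0 d) ≃ₗ[ℝ] (End0 d)
  μ1 : (Gl d) ≃ₗ[ℝ] (Gl d)
  hs : ∀ X : Gl d, (μ1 X).1 = μ0 X.1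
  ht : ∀ X : Gl d, (μ1 X).1 + δm d (μ1 X).2 = μ0 (X.1 + δm d X.2)
  hid : ∀ A : End0 d, μ1 (A, 0) = (μ0 A, 0)
  hcomp : ∀ (A : End0 d) (φ φ' : V₀ →ₗ[ℝ] V₁),
    μ1 (A, φ + φ') = ((μ1 (A, φ)).1, (μ1 (A, φ)).2 + (μ1 (A + δm d φ, φ')).2)
  μ2 : (End0 d) →ₗ[ℝ] (End0 d) →ₗ[ℝ] Gl d
  hskew : ∀ A B, μ2 A B = - μ2 B A
  hs2 : ∀ A B, (μ2 A B).1 = μ0 (bkt0 d A B)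
  ht2 : ∀ A B, (μ2 A B).1 + δm d (μ2 A B).2 = bkt0 d (μ0 A) (μ0 B)
  hnat : ∀ (A B : End0 d) (φ ψ : V₀ →ₗ[ℝ] V₁),
    (μ2 A B).2 + (bkt d (μ1 (A, φ)) (μ1 (B, ψ))).2
      = (μ1 (bkt d (A, φ) (B, ψ))).2 + (μ2 (A + δm d φ) (B + δm d ψ)).2
  hcoh : ∀ A B C : End0 d,
    (μ2 (bkt0 d A B) C).2 + (bkt d (μ2 A B) ((μ0 C, 0) : Gl d)).2
      = (μ2 A (bkt0 d B C)).2 + (μ2 B (bkt0 d C A)).2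
        + (bkt d ((μ0 A, 0) : Gl d) (μ2 B C)).2
        + (bkt d ((μ0 B, 0) : Gl d) (μ2 C A)).2

/-- the `μ`-twisted pairing on `E`. -/
def pairμ (μ : GlIso d) (e₁ e₂ : E d) : V₀ × V₁ :=
  (2⁻¹ : ℝ) • (act d (μ.μ1 e₁.1) e₂.2 + act d (μ.μ1 e₂.1) e₁.2)

/-- the `μ`-twisted Courant bracket on `E`. -/
def courantμ (μ : GlIso d) (e₁ e₂ : E d) : E d :=
  (bkt d e₁.1 e₂.1, (2⁻¹ : ℝ) • (act d (μ.μ1 e₁.1) e₂.2 - act d (μ.μ1 e₂.1) e₁.2))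

/-- orthogonal complement w.r.t. the `μ`-twisted pairing. -/
def perpμ (μ : GlIso d) (L : Set (E d)) : Set (E d) := {e | ∀ l ∈ L, pairμ d μ e l = 0}

/-- the `μ`-twisted Dorfman bracket at the level of objects. -/
def dorfObjμ (μ : GlIso d) (x y : (End0 d) × V₀) : (End0 d) × V₀ :=
  (bkt0 d x.1 y.1, (μ.μ0 x.1).1.1 y.2)

end Omni

end

namespace Omni

section Leibniz

variable {V₀ V₁ : Type*} [AddCommGroup V₀] [Module ℝ V₀] [AddCommGroup V₁] [Module ℝ V₁]
  {d : V₁ →ₗ[ℝ] V₀}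

lemma End0.apply_d (A : End0 d) (m : V₁) : A.1.1 (d m) = d (A.1.2 m) :=
  LinearMap.congr_fun A.2 m

lemma coe_bkt0 (A B : End0 d) :
    ((bkt0 d A B : End0 d) : Module.End ℝ V₀ × Module.End ℝ V₁) = A * B - B * A :=
  rfl

lemma bkt0_leibniz (A B C : End0 d) :
    bkt0 d A (bkt0 d B C) = bkt0 d (bkt0 d A B) C + bkt0 d B (bkt0 d A C) :=
  Subtype.ext <| by simp only [Submodule.coe_add, coe_bkt0]; noncomm_ring

lemma bkt_leibniz (X Y Z : Gl d) :
    bkt d X (bkt d Y Z) = bkt d (bkt d X Y) Z + bkt d Y (bkt d X Z) := by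
  refine Prod.ext (bkt0_leibniz X.1 Y.1 Z.1) ?_
  ext x
  simp only [bkt, bkt0, bktAφ, bktδ, Prod.snd_add, LinearMap.add_apply, LinearMap.sub_apply,
    LinearMap.comp_apply, map_add, map_sub, End0.apply_d]
  abel

lemma act_leibniz (X Y : Gl d) (ξ : V₀ × V₁) :
    act d X (act d Y ξ) = act d (bkt d X Y) ξ + act d Y (act d X ξ) := by
  ext
  · simp [act, bkt, bkt0]
  · simp only [act, bkt, bkt0, bktAφ, bktδ, Prod.snd_add, LinearMap.add_apply,
      LinearMap.sub_apply, LinearMap.comp_apply, map_add, End0.apply_d]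
    abel

end Leibniz

end Omni

open Omni in
theorem dorfman_leibniz_general {V₀ V₁ : Type*} [AddCommGroup V₀] [Module ℝ V₀] [AddCommGroup V₁] [Module ℝ V₁]
    (d : V₁ →ₗ[ℝ] V₀) :
    ∀ e₁ e₂ e₃ : E d,
      dorfman d e₁ (dorfman d e₂ e₃)
        = dorfman d (dorfman d e₁ e₂) e₃ + dorfman d e₂ (dorfman d e₁ e₃) :=
  fun e₁ e₂ e₃ => Prod.ext (bkt_leibniz e₁.1 e₂.1 e₃.1) (act_leibniz e₁.1 e₂.1 e₃.2)

open Omni in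
/-- The Dorfman bracket on the omni-Lie 2-algebra `gl(𝕍) ⊕ 𝕍` satisfies the Leibniz rule. -/
theorem dorfman_leibniz {V₀ V₁ : Type*} [AddCommGroup V₀] [Module ℝ V₀] [AddCommGroup V₁] [Module ℝ V₁]
    [FiniteDimensional ℝ V₀] [FiniteDimensional ℝ V₁]
    (d : V₁ →ₗ[ℝ] V₀) :
    ∀ e₁ e₂ e₃ : E d,
      dorfman d e₁ (dorfman d e₂ e₃)
        = dorfman d (dorfman d e₁ e₂) e₃ + dorfman d e₂ (dorfman d e₁ e₃) :=
  dorfman_leibniz_general d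
end

section
/- Let 𝔇 ⊆ End⁰ ⊕ End¹ be a subspace, 𝔇⁰ := {ξ ∈ V₀ ⊕ V₁ : X·ξ = 0 for all X ∈ 𝔇} its null space, and π : V₀ ⊕ V₁ → End⁰ ⊕ End¹ a linear map with π(ξ)·η = −π(η)·ξ for all ξ, η ∈ 𝔇⁰, such that L := {X + π(ξ) + ξ : X ∈ 𝔇, ξ ∈ 𝔇⁰} is maximal isotropic (L = L^⊥). Then L is a Dirac structure (closed under the Courant bracket ⟦·,·⟧) if and only if: (1) [X,Y] ∈ 𝔇 for all X, Y ∈ 𝔇; (2) π(π(ξ)·η) − [π(ξ), π(η)] ∈ 𝔇 for all ξ, η ∈ 𝔇⁰; and (3) π(ξ)·η ∈ 𝔇⁰ for all ξ, η ∈ 𝔇⁰. -/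
open LinearMap

noncomputable section

namespace Omni

variable {V₀ V₁ : Type*}
  [AddCommGroup V₀] [Module ℝ V₀] [AddCommGroup V₁] [Module ℝ V₁]

variable (d : V₁ →ₗ[ℝ] V₀)

/-!
The action of `gl(𝕍)` on `𝕍` is a representation of the bracket, and on `L` the Courant bracket
of `X + π ξ + ξ` and `Y + π η + η` reduces, by skew-symmetry of `π` on `𝔇⁰`, to
`[X + π ξ, Y + π η] + π(ξ)·η`. Since `L^⊥ ⊆ L`, `𝔇` is exactly the annihilator of `𝔇⁰`
(an annihilator `Z` gives `(Z, 0) ∈ L^⊥`), so the bracket lands in `L` iff `π(ξ)·η ∈ 𝔇⁰` and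
`[X + π ξ, Y + π η] − π(π(ξ)·η)` kills `𝔇⁰`. Given (3), that element acts on `𝔇⁰` as
`[π ξ, π η] − π(π(ξ)·η)`, which is what (2) controls.
-/

section CharacteristicPair

variable {d}

lemma act_add_left (X Y : Gl d) (ξ : V₀ × V₁) :
    act d (X + Y) ξ = act d X ξ + act d Y ξ := by
  simp only [act, Prod.ext_iff, Prod.fst_add, Prod.snd_add, Submodule.coe_add,
    LinearMap.add_apply, true_and]
  abel

lemma act_sub_left (X Y : Gl d) (ξ : V₀ × V₁) :
    act d (X - Y) ξ = act d X ξ - act d Y ξ := by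
  simp only [act, Prod.ext_iff, Prod.fst_sub, Prod.snd_sub, Submodule.coe_sub,
    LinearMap.sub_apply, true_and]
  abel

lemma act_zero_right (X : Gl d) : act d X 0 = 0 := by
  simp [act]

lemma act_bkt (X Y : Gl d) (ξ : V₀ × V₁) :
    act d (bkt d X Y) ξ = act d X (act d Y ξ) - act d Y (act d X ξ) := by
  obtain ⟨⟨⟨A₀, A₁⟩, hA⟩, φ⟩ := X
  obtain ⟨⟨⟨B₀, B₁⟩, hB⟩, ψ⟩ := Y
  have ha : ∀ x, A₀ (d x) = d (A₁ x) := LinearMap.congr_fun hA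
  have hb : ∀ x, B₀ (d x) = d (B₁ x) := LinearMap.congr_fun hB
  simp only [act, bkt, bkt0, bktAφ, bktδ, Prod.ext_iff]
  constructor
  · simp
  · simp [ha, hb]
    abel

def nullSpace (𝔇 : Submodule ℝ (Gl d)) : Set (V₀ × V₁) :=
  {ξ | ∀ X ∈ 𝔇, act d X ξ = 0}

/-- The subspace `L = 𝔇 ⊕ G_{π|_{𝔇⁰}}` of `E` attached to a characteristic pair `(𝔇, π)`. -/
def charL (𝔇 : Submodule ℝ (Gl d)) (π : (V₀ × V₁) →ₗ[ℝ] Gl d) : Set (E d) :=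
  {e | ∃ X ∈ 𝔇, ∃ ξ ∈ nullSpace 𝔇, e = (X + π ξ, ξ)}

variable {𝔇 : Submodule ℝ (Gl d)} {π : (V₀ × V₁) →ₗ[ℝ] Gl d}

lemma zero_mem_nullSpace : (0 : V₀ × V₁) ∈ nullSpace 𝔇 :=
  fun X _ => act_zero_right X

lemma act_add_of_mem_of_mem_nullSpace {X : Gl d} (Z : Gl d) {μ : V₀ × V₁} (hX : X ∈ 𝔇)
    (hμ : μ ∈ nullSpace 𝔇) : act d (X + Z) μ = act d Z μ := by
  rw [act_add_left, hμ X hX, zero_add]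

lemma mk_mem_charL_iff {Z : Gl d} {ζ : V₀ × V₁} :
    ((Z, ζ) : E d) ∈ charL 𝔇 π ↔ ζ ∈ nullSpace 𝔇 ∧ Z - π ζ ∈ 𝔇 := by
  constructor
  · rintro ⟨X, hX, ξ, hξ, h⟩
    obtain ⟨rfl, rfl⟩ := Prod.mk.inj h
    exact ⟨hξ, by simpa using hX⟩
  · rintro ⟨hζ, hZ⟩
    exact ⟨Z - π ζ, hZ, ζ, hζ, by simp⟩

lemma mem_of_act_nullSpace_eq_zero (hco : perp d (charL 𝔇 π) ⊆ charL 𝔇 π) {Z : Gl d}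
    (hZ : ∀ μ ∈ nullSpace 𝔇, act d Z μ = 0) : Z ∈ 𝔇 := by
  have hperp : ((Z, 0) : E d) ∈ perp d (charL 𝔇 π) := by
    rintro _ ⟨Y, -, η, hη, rfl⟩
    simp [pairE, hZ η hη, act_zero_right]
  simpa using (mk_mem_charL_iff.mp (hco hperp)).2

lemma courant_mk_add_mk_add {X Y : Gl d} {ξ η : V₀ × V₁}
    (hskew : act d (π η) ξ = - act d (π ξ) η) (hX : X ∈ 𝔇) (hY : Y ∈ 𝔇)
    (hξ : ξ ∈ nullSpace 𝔇) (hη : η ∈ nullSpace 𝔇) :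
    courant d ((X + π ξ, ξ) : E d) (Y + π η, η) = (bkt d (X + π ξ) (Y + π η), act d (π ξ) η) := by
  simp only [courant, act_add_of_mem_of_mem_nullSpace _ hX hη,
    act_add_of_mem_of_mem_nullSpace _ hY hξ, hskew, Prod.mk.injEq, true_and]
  module

lemma bkt_mem_of_courant_closed
    (H : ∀ e ∈ charL 𝔇 π, ∀ e' ∈ charL 𝔇 π, courant d e e' ∈ charL 𝔇 π) {X Y : Gl d}
    (hX : X ∈ 𝔇) (hY : Y ∈ 𝔇) : bkt d X Y ∈ 𝔇 := by
  have hXL : ((X, 0) : E d) ∈ charL 𝔇 π := mk_mem_charL_iff.mpr ⟨zero_mem_nullSpace, by simpa⟩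
  have hYL : ((Y, 0) : E d) ∈ charL 𝔇 π := mk_mem_charL_iff.mpr ⟨zero_mem_nullSpace, by simpa⟩
  have hXY := H _ hXL _ hYL
  simp only [courant, act_zero_right, sub_zero, smul_zero] at hXY
  simpa using (mk_mem_charL_iff.mp hXY).2

lemma characteristic_conditions_of_courant_closed
    (H : ∀ e ∈ charL 𝔇 π, ∀ e' ∈ charL 𝔇 π, courant d e e' ∈ charL 𝔇 π) {ξ η : V₀ × V₁}
    (hskew : act d (π η) ξ = - act d (π ξ) η) (hξ : ξ ∈ nullSpace 𝔇) (hη : η ∈ nullSpace 𝔇) :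
    π (act d (π ξ) η) - bkt d (π ξ) (π η) ∈ 𝔇 ∧ act d (π ξ) η ∈ nullSpace 𝔇 := by
  have hξL : ((0 + π ξ, ξ) : E d) ∈ charL 𝔇 π := ⟨0, 𝔇.zero_mem, ξ, hξ, rfl⟩
  have hηL : ((0 + π η, η) : E d) ∈ charL 𝔇 π := ⟨0, 𝔇.zero_mem, η, hη, rfl⟩
  have hξη := H _ hξL _ hηL
  rw [courant_mk_add_mk_add hskew 𝔇.zero_mem 𝔇.zero_mem hξ hη, zero_add, zero_add,
    mk_mem_charL_iff] at hξη
  exact ⟨by simpa using 𝔇.neg_mem hξη.2, hξη.1⟩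

lemma act_bkt_add_add_of_mem {X Y Z W : Gl d} {μ : V₀ × V₁} (hX : X ∈ 𝔇) (hY : Y ∈ 𝔇)
    (hZ : act d Z μ ∈ nullSpace 𝔇) (hW : act d W μ ∈ nullSpace 𝔇) (hμ : μ ∈ nullSpace 𝔇) :
    act d (bkt d (X + Z) (Y + W)) μ = act d (bkt d Z W) μ := by
  rw [act_bkt, act_bkt, act_add_of_mem_of_mem_nullSpace _ hX hμ,
    act_add_of_mem_of_mem_nullSpace _ hY hμ, act_add_of_mem_of_mem_nullSpace _ hX hW,
    act_add_of_mem_of_mem_nullSpace _ hY hZ]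

lemma courant_closed_of_characteristic_conditions (hco : perp d (charL 𝔇 π) ⊆ charL 𝔇 π)
    (hskew : ∀ ξ ∈ nullSpace 𝔇, ∀ η ∈ nullSpace 𝔇, act d (π ξ) η = - act d (π η) ξ)
    (hbkt : ∀ ξ ∈ nullSpace 𝔇, ∀ η ∈ nullSpace 𝔇, π (act d (π ξ) η) - bkt d (π ξ) (π η) ∈ 𝔇)
    (hact : ∀ ξ ∈ nullSpace 𝔇, ∀ η ∈ nullSpace 𝔇, act d (π ξ) η ∈ nullSpace 𝔇) :
    ∀ e ∈ charL 𝔇 π, ∀ e' ∈ charL 𝔇 π, courant d e e' ∈ charL 𝔇 π := by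
  rintro _ ⟨X, hX, ξ, hξ, rfl⟩ _ ⟨Y, hY, η, hη, rfl⟩
  rw [courant_mk_add_mk_add (hskew η hη ξ hξ) hX hY hξ hη, mk_mem_charL_iff]
  refine ⟨hact ξ hξ η hη, mem_of_act_nullSpace_eq_zero hco fun μ hμ => ?_⟩
  have hπ := hμ _ (hbkt ξ hξ η hη)
  rw [act_sub_left, act_bkt_add_add_of_mem hX hY (hact ξ hξ μ hμ) (hact η hη μ hμ) hμ]
  rwa [act_sub_left, sub_eq_zero, eq_comm, ← sub_eq_zero] at hπ

end CharacteristicPair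

end Omni

end

open Omni in
theorem dirac_iff_characteristic_conditions_general {V₀ V₁ : Type*} [AddCommGroup V₀] [Module ℝ V₀] [AddCommGroup V₁] [Module ℝ V₁]
    (d : V₁ →ₗ[ℝ] V₀)
    (𝔇 : Submodule ℝ (Gl d)) (π : (V₀ × V₁) →ₗ[ℝ] Gl d)
    (D0 : Set (V₀ × V₁)) (hD0 : D0 = {ξ : V₀ × V₁ | ∀ X ∈ 𝔇, act d X ξ = 0})
    (hskew : ∀ ξ ∈ D0, ∀ η ∈ D0, act d (π ξ) η = - act d (π η) ξ)
    (L : Set (E d))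
    (hL : L = {e : E d | ∃ X ∈ 𝔇, ∃ ξ ∈ D0, e = (X + π ξ, ξ)})
    (hmax : L = perp d L) :
    (∀ e ∈ L, ∀ e' ∈ L, courant d e e' ∈ L)
      ↔ ((∀ X ∈ 𝔇, ∀ Y ∈ 𝔇, bkt d X Y ∈ 𝔇) ∧
         (∀ ξ ∈ D0, ∀ η ∈ D0, π (act d (π ξ) η) - bkt d (π ξ) (π η) ∈ 𝔇) ∧
         (∀ ξ ∈ D0, ∀ η ∈ D0, act d (π ξ) η ∈ D0)) := by
  subst hD0 hL
  refine ⟨fun H => ⟨fun X hX Y hY => bkt_mem_of_courant_closed H hX hY, ?_, ?_⟩,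
    fun ⟨_, hbkt, hact⟩ => courant_closed_of_characteristic_conditions hmax.ge hskew hbkt hact⟩
  · exact fun ξ hξ η hη =>
      (characteristic_conditions_of_courant_closed H (hskew η hη ξ hξ) hξ hη).1
  · exact fun ξ hξ η hη =>
      (characteristic_conditions_of_courant_closed H (hskew η hη ξ hξ) hξ hη).2

open Omni in
/-- For a maximal isotropic `L = 𝔇 ⊕ G_{π|_{𝔇⁰}}` given by a characteristic pair `(𝔇, π)`,
`L` is a Dirac structure iff (1) `𝔇` is closed under the bracket, (2)
`π(π(ξ)η) − [π(ξ),π(η)] ∈ 𝔇`, and (3) `π(ξ)η ∈ 𝔇⁰`, for all `ξ, η ∈ 𝔇⁰`. -/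
theorem dirac_iff_characteristic_conditions {V₀ V₁ : Type*} [AddCommGroup V₀] [Module ℝ V₀] [AddCommGroup V₁] [Module ℝ V₁]
    [FiniteDimensional ℝ V₀] [FiniteDimensional ℝ V₁]
    (d : V₁ →ₗ[ℝ] V₀)
    (𝔇 : Submodule ℝ (Gl d)) (π : (V₀ × V₁) →ₗ[ℝ] Gl d)
    (D0 : Set (V₀ × V₁)) (hD0 : D0 = {ξ : V₀ × V₁ | ∀ X ∈ 𝔇, act d X ξ = 0})
    (hskew : ∀ ξ ∈ D0, ∀ η ∈ D0, act d (π ξ) η = - act d (π η) ξ)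
    (L : Set (E d))
    (hL : L = {e : E d | ∃ X ∈ 𝔇, ∃ ξ ∈ D0, e = (X + π ξ, ξ)})
    (hmax : L = perp d L) :
    (∀ e ∈ L, ∀ e' ∈ L, courant d e e' ∈ L)
      ↔ ((∀ X ∈ 𝔇, ∀ Y ∈ 𝔇, bkt d X Y ∈ 𝔇) ∧
         (∀ ξ ∈ D0, ∀ η ∈ D0, π (act d (π ξ) η) - bkt d (π ξ) (π η) ∈ 𝔇) ∧
         (∀ ξ ∈ D0, ∀ η ∈ D0, act d (π ξ) η ∈ D0)) :=
  dirac_iff_characteristic_conditions_general d 𝔇 π D0 hD0 hskew L hL hmax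
end
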